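/- arXiv:1607.02092 — 4 statements merged into one kernel-verified Lean document; each statement's English description precedes it below -/
import Mathlib

section
/- For β ∈ (0,1] and h ∈ (0,1), the inequality 2β^h / (1 + (2β−1)h) ≥ 1 holds for all h ∈ (0,1) if and only if β ≥ β_c, where β_c ∈ (0,1] is the unique solution of 2β ln β = 2β − 1 in (0,1]. -/
/-!
Write `f_β(h) = 2β^h - (1 + (2β - 1)h)`, so the inequality says `f_β ≥ 0` on `(0,1)`.
Since `f_β(1) = 0` and `f_β'(1) = 2β ln β - (2β - 1)`, nonnegativity to the left of `1` forces
`2β ln β ≤ 2β - 1`; conversely, under that condition the tangent line of the convex function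
`h ↦ β^h` at `h = 1` already gives `f_β ≥ 0` on `h ≤ 1`. Finally `β ↦ β ln β - β` has derivative
`ln β < 0` on `(0,1)`, so `2β ln β ≤ 2β - 1` holds exactly for `β ≥ β_c`.
-/

open Real Set Topology

lemma strictAntiOn_mul_log_sub_self : StrictAntiOn (fun x : ℝ ↦ x * log x - x) (Icc 0 1) := by
  refine strictAntiOn_of_deriv_neg (convex_Icc 0 1)
    ((continuous_mul_log.sub continuous_id).continuousOn) fun x hx ↦ ?_
  rw [interior_Icc] at hx
  have hderiv : HasDerivAt (fun x : ℝ ↦ x * log x - x) (log x) x := by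
    simpa using (hasDerivAt_mul_log hx.1.ne').fun_sub (hasDerivAt_id' x)
  rw [hderiv.deriv]
  exact log_neg hx.1 hx.2

lemma rpow_mul_one_add_sub_mul_log_le_rpow {a : ℝ} (ha : 0 < a) (x y : ℝ) :
    a ^ y * (1 + (x - y) * log a) ≤ a ^ x :=
  calc a ^ y * (1 + (x - y) * log a)
      ≤ a ^ y * exp ((x - y) * log a) := by
        gcongr
        linarith [add_one_le_exp ((x - y) * log a)]
    _ = a ^ x := by rw [rpow_def_of_pos ha, rpow_def_of_pos ha, ← exp_add]; ring_nf

lemma HasDerivAt.nonpos_of_eventually_le_left {f : ℝ → ℝ} {f' x : ℝ} (hf : HasDerivAt f f' x)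
    (hle : ∀ᶠ y in 𝓝[<] x, f x ≤ f y) : f' ≤ 0 := by
  refine le_of_tendsto ((hasDerivAt_iff_tendsto_slope.mp hf).mono_left (nhdsLT_le_nhdsNE x)) ?_
  filter_upwards [hle, self_mem_nhdsWithin] with y hy hyx
  rw [slope_def_field]
  exact div_nonpos_of_nonneg_of_nonpos (sub_nonneg.mpr hy) (sub_nonpos.mpr (le_of_lt hyx))

lemma hasDerivAt_two_mul_rpow_sub_affine {β : ℝ} (hβ : 0 < β) :
    HasDerivAt (fun h : ℝ ↦ 2 * β ^ h - (1 + (2 * β - 1) * h))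
      (2 * β * log β - (2 * β - 1)) 1 := by
  refine (((hasStrictDerivAt_const_rpow hβ 1).hasDerivAt.const_mul 2).fun_sub
    (((hasDerivAt_id' (1 : ℝ)).const_mul (2 * β - 1)).const_add 1)).congr_deriv ?_
  rw [rpow_one]
  ring

lemma two_mul_mul_log_le_of_one_add_mul_le_two_mul_rpow {β : ℝ} (hβ : 0 < β)
    (H : ∀ h ∈ Ioo (0 : ℝ) 1, 1 + (2 * β - 1) * h ≤ 2 * β ^ h) :
    2 * β * log β ≤ 2 * β - 1 := by
  have hle : ∀ᶠ h in 𝓝[<] (1 : ℝ),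
      2 * β ^ (1 : ℝ) - (1 + (2 * β - 1) * 1) ≤ 2 * β ^ h - (1 + (2 * β - 1) * h) := by
    filter_upwards [Ioo_mem_nhdsLT zero_lt_one] with h hh
    rw [rpow_one]
    linarith [H h hh]
  linarith [(hasDerivAt_two_mul_rpow_sub_affine hβ).nonpos_of_eventually_le_left hle]

lemma one_add_mul_le_two_mul_rpow {β h : ℝ} (hβ : 0 < β) (hlog : 2 * β * log β ≤ 2 * β - 1)
    (h1 : h ≤ 1) : 1 + (2 * β - 1) * h ≤ 2 * β ^ h := by
  have htangent := rpow_mul_one_add_sub_mul_log_le_rpow hβ h 1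
  rw [rpow_one] at htangent
  nlinarith [mul_nonneg (sub_nonneg.mpr h1) (sub_nonneg.mpr hlog)]

theorem inequality_iff_ge_beta_c_general (βc : ℝ)
    (hβc_mem : βc ∈ Set.Ioc (0 : ℝ) 1)
    (hβc_eq : 2 * βc * Real.log βc = 2 * βc - 1)
    (β : ℝ) (hβ : β ∈ Set.Ioc (0 : ℝ) 1) :
    (∀ h ∈ Set.Ioo (0 : ℝ) 1, 1 ≤ 2 * β ^ h / (1 + (2 * β - 1) * h)) ↔ βc ≤ β := by
  have hden : ∀ h ∈ Ioo (0 : ℝ) 1, 0 < 1 + (2 * β - 1) * h := fun h hh ↦ by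
    nlinarith [hh.1, hh.2, hβ.1]
  have hlog_iff : 2 * β * log β ≤ 2 * β - 1 ↔ βc ≤ β := by
    rw [← strictAntiOn_mul_log_sub_self.le_iff_ge (Ioc_subset_Icc_self hβ)
      (Ioc_subset_Icc_self hβc_mem)]
    constructor <;> intro h <;> linarith
  rw [← hlog_iff]
  constructor
  · intro H
    exact two_mul_mul_log_le_of_one_add_mul_le_two_mul_rpow hβ.1 fun h hh ↦ by
      simpa using (le_div_iff₀ (hden h hh)).mp (H h hh)
  · intro hlog h hh
    rw [le_div_iff₀ (hden h hh), one_mul]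
    exact one_add_mul_le_two_mul_rpow hβ.1 hlog hh.2.le

/-- For `β ∈ (0,1]`, the inequality `2β^h / (1 + (2β−1)h) ≥ 1` holds for all
`h ∈ (0,1)` if and only if `β ≥ β_c`, where `β_c` is the unique solution in
`(0,1]` of `2β ln β = 2β − 1`. -/
theorem inequality_iff_ge_beta_c (βc : ℝ)
    (hβc_mem : βc ∈ Set.Ioc (0 : ℝ) 1)
    (hβc_eq : 2 * βc * Real.log βc = 2 * βc - 1)
    (hβc_uniq : ∀ β ∈ Set.Ioc (0 : ℝ) 1, 2 * β * Real.log β = 2 * β - 1 → β = βc)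
    (β : ℝ) (hβ : β ∈ Set.Ioc (0 : ℝ) 1) :
    (∀ h ∈ Set.Ioo (0 : ℝ) 1, 1 ≤ 2 * β ^ h / (1 + (2 * β - 1) * h)) ↔ βc ≤ β :=
  inequality_iff_ge_beta_c_general βc hβc_mem hβc_eq β hβ
end

section
/- For β ∈ (β_c, 1], there exists p ∈ (1,2] such that (2β−1)p + 1 − 2β^p > 0, where β_c is the unique root in (0,1] of 2β ln β = 2β − 1. -/
/-!
Put `f β p = (2β - 1) p + 1 - 2 β ^ p`. Then `f β 1 = 0` and `∂ₚ f β 1 = 2β - 1 - 2β log β`.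
The function `β ↦ β - β log β` has derivative `-log β > 0` on `(0, 1)`, so it is strictly
increasing on `[0, 1]`; as `β_c` is a root of `2(β - β log β) - 1`, the slope `∂ₚ f β 1` is
positive for `β ∈ (β_c, 1]`, and `f β p > 0` for every `p > 1` close enough to `1`.
-/

open Real Set Filter Topology

lemma HasDerivAt.eventually_pos_nhdsGT {f : ℝ → ℝ} {f' x : ℝ} (hf : HasDerivAt f f' x)
    (hf' : 0 < f') (hx : f x = 0) : ∀ᶠ y in 𝓝[>] x, 0 < f y := by
  have hslope : ∀ᶠ y in 𝓝[>] x, 0 < slope f x y :=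
    ((hasDerivAt_iff_tendsto_slope.mp hf).eventually (eventually_gt_nhds hf')).filter_mono
      (nhdsGT_le_nhdsNE x)
  filter_upwards [hslope, self_mem_nhdsWithin] with y hy hxy
  exact pos_of_slope_pos hxy hy hx

lemma Real.strictMonoOn_self_add_negMulLog : StrictMonoOn (fun x ↦ x + negMulLog x) (Icc 0 1) := by
  refine strictMonoOn_of_deriv_pos (convex_Icc 0 1) (by fun_prop) fun x hx ↦ ?_
  rw [interior_Icc] at hx
  have h : HasDerivAt (fun x ↦ x + negMulLog x) (1 + (-log x - 1)) x :=
    (hasDerivAt_id x).add (hasDerivAt_negMulLog hx.1.ne')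
  rw [h.deriv]
  linarith [log_neg hx.1 hx.2]

lemma Real.hasDerivAt_affine_sub_const_rpow_one {β : ℝ} (hβ : 0 < β) (a b c : ℝ) :
    HasDerivAt (fun p ↦ a * p + b - c * β ^ p) (a - c * β * log β) 1 := by
  have h : HasDerivAt (fun p ↦ a * p + b - c * β ^ p) (a * 1 - c * (β ^ (1 : ℝ) * log β)) 1 :=
    (((hasDerivAt_id (1 : ℝ)).const_mul a).add_const b).sub
      ((hasStrictDerivAt_const_rpow hβ 1).hasDerivAt.const_mul c)
  simpa [rpow_one, mul_assoc] using h

theorem exists_p_positive_general (βc : ℝ)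
    (hβc_mem : βc ∈ Set.Ioc (0 : ℝ) 1)
    (hβc_eq : 2 * βc * Real.log βc = 2 * βc - 1)
    (β : ℝ) (hβ : βc < β) (hβ1 : β ≤ 1) :
    ∃ p ∈ Set.Ioc (1 : ℝ) 2, 0 < (2 * β - 1) * p + 1 - 2 * β ^ p := by
  have hβ0 : 0 < β := hβc_mem.1.trans hβ
  have hslope : 0 < 2 * β - 1 - 2 * β * log β := by
    have := strictMonoOn_self_add_negMulLog ⟨hβc_mem.1.le, hβc_mem.2⟩ ⟨hβ0.le, hβ1⟩ hβ
    simp only [negMulLog] at this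
    linarith [hβc_eq]
  have hpos := (hasDerivAt_affine_sub_const_rpow_one hβ0 (2 * β - 1) 1 2).eventually_pos_nhdsGT
    hslope (by simp)
  obtain ⟨p, hp, hp_mem⟩ := (hpos.and (Ioc_mem_nhdsGT one_lt_two)).exists
  exact ⟨p, hp_mem, hp⟩

/-- For `β ∈ (β_c, 1]`, there exists `p ∈ (1,2]` such that
`(2β−1)p + 1 − 2β^p > 0`, where `β_c` is the unique root in `(0,1]` of
`2β ln β = 2β − 1`. -/
theorem exists_p_positive (βc : ℝ)
    (hβc_mem : βc ∈ Set.Ioc (0 : ℝ) 1)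
    (hβc_eq : 2 * βc * Real.log βc = 2 * βc - 1)
    (hβc_uniq : ∀ β ∈ Set.Ioc (0 : ℝ) 1, 2 * β * Real.log β = 2 * β - 1 → β = βc)
    (β : ℝ) (hβ : βc < β) (hβ1 : β ≤ 1) :
    ∃ p ∈ Set.Ioc (1 : ℝ) 2, 0 < (2 * β - 1) * p + 1 - 2 * β ^ p :=
  exists_p_positive_general βc hβc_mem hβc_eq β hβ hβ1
end

section
/- If X₁ and X₂ are independent, integrable, nonnegative random variables in L^p for 1 < p ≤ 2, then E[(X₁+X₂)^p] − (E[X₁+X₂])^p ≤ (E[X₁^p] − (E X₁)^p) + (E[X₂^p] − (E X₂)^p). -/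
/-!
For `1 ≤ p ≤ 2` and `c ≥ 0` the function `y ↦ (y + c) ^ p - y ^ p` is concave on `[0, ∞)`: its
second derivative is `p (p - 1) ((y + c) ^ (p - 2) - y ^ (p - 2)) ≤ 0`. Jensen's inequality then
gives `E (Y + c) ^ p ≤ E Y ^ p + (E Y + c) ^ p - (E Y) ^ p` for every nonnegative `Y ∈ L^p`.
By independence the law of `X₁ + X₂` is the convolution of the laws `ν₁`, `ν₂` of `X₁`, `X₂`, so
`E (X₁ + X₂) ^ p = ∫ ∫ (x + y) ^ p dν₂(y) dν₁(x)`; applying the bound to the inner integral with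
`c = x`, and then to the outer one with `c = E X₂`, yields the inequality.
-/

open MeasureTheory ProbabilityTheory Set

lemma continuous_rpow_add_sub_rpow {p : ℝ} (hp : 0 ≤ p) (c : ℝ) :
    Continuous fun y : ℝ => (y + c) ^ p - y ^ p :=
  ((continuous_add_const c).rpow_const fun _ => Or.inr hp).sub
    (continuous_id.rpow_const fun _ => Or.inr hp)

lemma hasDerivAt_rpow_add_sub_rpow {q c x : ℝ} (hc : 0 ≤ c) (hx : 0 < x) :
    HasDerivAt (fun y : ℝ => (y + c) ^ q - y ^ q) (q * (x + c) ^ (q - 1) - q * x ^ (q - 1)) x := by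
  have hshift : HasDerivAt (fun y : ℝ => (y + c) ^ q) (q * (x + c) ^ (q - 1)) x := by
    simpa using ((hasDerivAt_id x).add_const c).rpow_const (p := q) (Or.inl (by positivity))
  exact hshift.sub (Real.hasDerivAt_rpow_const (Or.inl hx.ne'))

lemma concaveOn_rpow_add_sub_rpow {p c : ℝ} (hp1 : 1 ≤ p) (hp2 : p ≤ 2) (hc : 0 ≤ c) :
    ConcaveOn ℝ (Ici 0) (fun y : ℝ => (y + c) ^ p - y ^ p) := by
  have hp0 : 0 ≤ p := by linarith
  refine concaveOn_of_hasDerivWithinAt2_nonpos (convex_Ici 0)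
    (continuous_rpow_add_sub_rpow hp0 c).continuousOn
    (f' := fun y => p * ((y + c) ^ (p - 1) - y ^ (p - 1)))
    (f'' := fun y => p * ((p - 1) * (y + c) ^ (p - 1 - 1) - (p - 1) * y ^ (p - 1 - 1))) ?_ ?_ ?_
    <;> intro x hx <;> rw [interior_Ici] at hx
  · simpa only [mul_sub] using (hasDerivAt_rpow_add_sub_rpow hc hx).hasDerivWithinAt
  · exact ((hasDerivAt_rpow_add_sub_rpow hc hx).const_mul p).hasDerivWithinAt
  · have hmono : (x + c) ^ (p - 1 - 1) ≤ x ^ (p - 1 - 1) :=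
      Real.rpow_le_rpow_of_nonpos hx (by linarith) (by linarith)
    have : 0 ≤ p * (p - 1) := mul_nonneg hp0 (by linarith)
    nlinarith

lemma MeasureTheory.MemLp.integrable_rpow {α : Type*} [MeasurableSpace α] {μ : Measure α}
    [IsFiniteMeasure μ] {f : α → ℝ} {p : ℝ} (hf : MemLp f (ENNReal.ofReal p) μ) (hp : 0 ≤ p) :
    Integrable (fun x => f x ^ p) μ := by
  refine hf.integrable_norm_rpow'.mono' (hf.1.aemeasurable.pow_const p).aestronglyMeasurable ?_
  refine Filter.Eventually.of_forall fun x => ?_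
  rw [ENNReal.toReal_ofReal hp, Real.norm_eq_abs, Real.norm_eq_abs]
  exact Real.abs_rpow_le_abs_rpow _ _

lemma integral_rpow_add_le {ν : Measure ℝ} [IsProbabilityMeasure ν] {p c : ℝ} (hp1 : 1 ≤ p)
    (hp2 : p ≤ 2) (hc : 0 ≤ c) (hν0 : 0 ≤ᵐ[ν] id) (hν : MemLp id (ENNReal.ofReal p) ν) :
    ∫ x, (x + c) ^ p ∂ν ≤ ∫ x, x ^ p ∂ν + ((∫ x, x ∂ν) + c) ^ p - (∫ x, x ∂ν) ^ p := by
  have hp0 : 0 ≤ p := by linarith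
  have hpow : Integrable (fun x : ℝ => x ^ p) ν := hν.integrable_rpow hp0
  have hshift : Integrable (fun x : ℝ => (x + c) ^ p) ν := by
    simpa using (hν.add (memLp_const c)).integrable_rpow hp0
  have hjensen := (concaveOn_rpow_add_sub_rpow hp1 hp2 hc).le_map_integral
    (continuous_rpow_add_sub_rpow hp0 c).continuousOn isClosed_Ici hν0
    (hν.integrable (ENNReal.one_le_ofReal.mpr hp1)) (hshift.sub hpow)
  simp only [id, integral_sub hshift hpow] at hjensen
  linarith

lemma memLp_id_conv {ν₁ ν₂ : Measure ℝ} [IsFiniteMeasure ν₁] [IsFiniteMeasure ν₂]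
    {q : ENNReal} (h₁ : MemLp id q ν₁) (h₂ : MemLp id q ν₂) : MemLp id q (ν₁ ∗ ν₂) := by
  rw [Measure.conv, memLp_map_measure_iff aestronglyMeasurable_id (by fun_prop)]
  exact (h₁.comp_fst ν₂).add (h₂.comp_snd ν₁)

theorem integral_rpow_conv_sub_rpow_le {ν₁ ν₂ : Measure ℝ} [IsProbabilityMeasure ν₁]
    [IsProbabilityMeasure ν₂] {p : ℝ} (hp1 : 1 ≤ p) (hp2 : p ≤ 2) (hν₁0 : 0 ≤ᵐ[ν₁] id)
    (hν₂0 : 0 ≤ᵐ[ν₂] id) (hν₁ : MemLp id (ENNReal.ofReal p) ν₁)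
    (hν₂ : MemLp id (ENNReal.ofReal p) ν₂) :
    ∫ z, z ^ p ∂(ν₁ ∗ ν₂) - ((∫ x, x ∂ν₁) + ∫ y, y ∂ν₂) ^ p ≤
      (∫ x, x ^ p ∂ν₁ - (∫ x, x ∂ν₁) ^ p) + (∫ y, y ^ p ∂ν₂ - (∫ y, y ∂ν₂) ^ p) := by
  have hp0 : 0 ≤ p := by linarith
  set m₂ := ∫ y, y ∂ν₂
  set v₂ := ∫ y, y ^ p ∂ν₂ - m₂ ^ p
  have hconv : Integrable (fun z : ℝ => z ^ p) (ν₁ ∗ ν₂) :=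
    (memLp_id_conv hν₁ hν₂).integrable_rpow hp0
  have hinner_int : Integrable (fun x => ∫ y, (x + y) ^ p ∂ν₂) ν₁ :=
    ((integrable_map_measure hconv.1 (by fun_prop)).mp hconv).integral_prod_left
  have hshift : Integrable (fun x : ℝ => (x + m₂) ^ p) ν₁ := by
    simpa using (hν₁.add (memLp_const m₂)).integrable_rpow hp0
  have hinner : ∀ᵐ x ∂ν₁, ∫ y, (x + y) ^ p ∂ν₂ ≤ (x + m₂) ^ p + v₂ := by
    filter_upwards [hν₁0] with x hx
    have := integral_rpow_add_le hp1 hp2 (show 0 ≤ x from hx) hν₂0 hν₂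
    simp only [add_comm _ x] at this
    linarith
  have houter := integral_rpow_add_le hp1 hp2 (integral_nonneg_of_ae hν₂0 : 0 ≤ m₂) hν₁0 hν₁
  have hstep : ∫ x, ∫ y, (x + y) ^ p ∂ν₂ ∂ν₁ ≤ ∫ x, (x + m₂) ^ p ∂ν₁ + v₂ := by
    simpa [integral_add hshift (integrable_const v₂)] using
      integral_mono_ae hinner_int (hshift.add (integrable_const v₂)) hinner
  rw [integral_conv hconv]
  linarith

theorem chauvin_neveu_inequality_general
    {Ω : Type*} [MeasurableSpace Ω] (μ : Measure Ω) [IsProbabilityMeasure μ]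
    (p : ℝ) (hp1 : 1 < p) (hp2 : p ≤ 2)
    (X₁ X₂ : Ω → ℝ) (hpos₁ : ∀ ω, 0 ≤ X₁ ω) (hpos₂ : ∀ ω, 0 ≤ X₂ ω)
    (hLp₁ : MemLp X₁ (ENNReal.ofReal p) μ) (hLp₂ : MemLp X₂ (ENNReal.ofReal p) μ)
    (hindep : IndepFun X₁ X₂ μ) :
    (∫ ω, (X₁ ω + X₂ ω) ^ p ∂μ) - (∫ ω, (X₁ ω + X₂ ω) ∂μ) ^ p ≤
      ((∫ ω, (X₁ ω) ^ p ∂μ) - (∫ ω, X₁ ω ∂μ) ^ p) +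
      ((∫ ω, (X₂ ω) ^ p ∂μ) - (∫ ω, X₂ ω ∂μ) ^ p) := by
  have hm₁ := hLp₁.1.aemeasurable
  have hm₂ := hLp₂.1.aemeasurable
  have := Measure.isProbabilityMeasure_map hm₁
  have := Measure.isProbabilityMeasure_map hm₂
  have hlaw := integral_rpow_conv_sub_rpow_le hp1.le hp2
    ((ae_map_iff hm₁ measurableSet_Ici).mpr (.of_forall hpos₁))
    ((ae_map_iff hm₂ measurableSet_Ici).mpr (.of_forall hpos₂))
    ((memLp_map_measure_iff aestronglyMeasurable_id hm₁).mpr hLp₁)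
    ((memLp_map_measure_iff aestronglyMeasurable_id hm₂).mpr hLp₂)
  have hmean {X : Ω → ℝ} (hm : AEMeasurable X μ) : ∫ x, x ∂(μ.map X) = ∫ ω, X ω ∂μ :=
    integral_map hm aestronglyMeasurable_id
  have hmoment {X : Ω → ℝ} (hm : AEMeasurable X μ) :
      ∫ x, x ^ p ∂(μ.map X) = ∫ ω, X ω ^ p ∂μ :=
    integral_map hm (measurable_id.pow_const p).aestronglyMeasurable
  have hone : 1 ≤ ENNReal.ofReal p := ENNReal.one_le_ofReal.mpr hp1.le
  rwa [← hindep.map_add_eq_map_conv_map₀ hm₁ hm₂, hmoment (hm₁.add hm₂), hmean hm₁, hmean hm₂,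
    hmoment hm₁, hmoment hm₂, ← integral_add (hLp₁.integrable hone) (hLp₂.integrable hone)] at hlaw

/-- Chauvin–Neveu inequality: if `X₁, X₂` are independent nonnegative random
variables in `L^p`, `1 < p ≤ 2`, then with `v_p(X) = E X^p − (E X)^p`,
`v_p(X₁+X₂) ≤ v_p(X₁) + v_p(X₂)`. -/
theorem chauvin_neveu_inequality
    {Ω : Type*} [MeasurableSpace Ω] (μ : Measure Ω) [IsProbabilityMeasure μ]
    (p : ℝ) (hp1 : 1 < p) (hp2 : p ≤ 2)
    (X₁ X₂ : Ω → ℝ) (hpos₁ : ∀ ω, 0 ≤ X₁ ω) (hpos₂ : ∀ ω, 0 ≤ X₂ ω)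
    (hint₁ : Integrable X₁ μ) (hint₂ : Integrable X₂ μ)
    (hLp₁ : MemLp X₁ (ENNReal.ofReal p) μ) (hLp₂ : MemLp X₂ (ENNReal.ofReal p) μ)
    (hindep : IndepFun X₁ X₂ μ) :
    (∫ ω, (X₁ ω + X₂ ω) ^ p ∂μ) - (∫ ω, (X₁ ω + X₂ ω) ∂μ) ^ p ≤
      ((∫ ω, (X₁ ω) ^ p ∂μ) - (∫ ω, X₁ ω ∂μ) ^ p) +
      ((∫ ω, (X₂ ω) ^ p ∂μ) - (∫ ω, X₂ ω ∂μ) ^ p) :=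
  chauvin_neveu_inequality_general μ p hp1 hp2 X₁ X₂ hpos₁ hpos₂ hLp₁ hLp₂ hindep
end

section
/- Suppose φ_β: [0,∞) → ℝ is differentiable and satisfies φ_β(r) = ∫_{S_β} φ_β²(rs) ν_β(ds) for all r ≥ 0, where β ∈ (0,1], β ≠ 1/2. Then φ_β satisfies the delayed differential equation φ_β'(r) = (1/(r(2β−1))) φ_β²(βr) − (1/(r(2β−1))) φ_β(r) for all r > 0. -/
/-!
Put `α = 1/(2β−1)` and `ψ(u) = φ(u)² u^(α−1)`. The substitution `u = rs` turns the fixed point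
equation into `φ(r) = (rβ)^(−α) F(rβ) / (2β−1)`, where `F` is a primitive of `ψ` on `(0, ∞)`:
`F(y) = ∫₀^y ψ` if `β > 1/2`, and `F(y) = −∫_y^∞ ψ` if `β < 1/2` (convergent since `φ` is bounded
and `α − 1 < −1`). Differentiating this product at `r` and using the representation once more
to eliminate `F(rβ)` gives the delayed equation.
-/

open MeasureTheory Real Set

/-- The support `S_β`: `[0, β]` if `β > 1/2`, and `[β, ∞)` if `β < 1/2`. -/
noncomputable def Sset (β : ℝ) : Set ℝ :=
  if 1 / 2 < β then Set.Icc 0 β else Set.Ici β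

/-- The density of `ν_β`: `s ↦ (s/β)^{1/(2β−1)} / (|2β−1| s)`. -/
noncomputable def nuDensity (β s : ℝ) : ℝ :=
  (s / β) ^ (1 / (2 * β - 1)) / (|2 * β - 1| * s)

open Filter Topology

lemma nuDensity_eq_mul_rpow {β x s : ℝ} (hβ : 0 < β) (hx : 0 < x) (hs : 0 < s) :
    nuDensity β s = x * (x * β) ^ (-(1 / (2 * β - 1))) / |2 * β - 1| *
      (x * s) ^ (1 / (2 * β - 1) - 1) := by
  rw [nuDensity]
  generalize 1 / (2 * β - 1) = α
  rw [mul_rpow hx.le hs.le, mul_rpow hx.le hβ.le, div_rpow hs.le hβ.le,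
    rpow_neg hx.le, rpow_neg hβ.le, rpow_sub hx, rpow_sub hs, rpow_one, rpow_one]
  have := rpow_pos_of_pos hx α
  have := rpow_pos_of_pos hβ α
  field_simp

lemma setIntegral_Sset_comp_mul_nuDensity_of_half_lt {β x : ℝ} (hβ : 1 / 2 < β) (hx : 0 < x)
    (f : ℝ → ℝ) :
    ∫ s in Sset β, f (x * s) * nuDensity β s =
      (x * β) ^ (-(1 / (2 * β - 1))) *
        (∫ u in 0..x * β, f u * u ^ (1 / (2 * β - 1) - 1)) / (2 * β - 1) := by
  have hβ0 : 0 < β := by linarith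
  have hK : 0 < 2 * β - 1 := by linarith
  rw [Sset, if_pos hβ, integral_Icc_eq_integral_Ioc,
    setIntegral_congr_fun measurableSet_Ioc fun s hs => by
      rw [nuDensity_eq_mul_rpow hβ0 hx hs.1, abs_of_pos hK, mul_left_comm],
    integral_const_mul, ← intervalIntegral.integral_of_le hβ0.le,
    intervalIntegral.integral_comp_mul_left (fun u => f u * u ^ (1 / (2 * β - 1) - 1)) hx.ne',
    mul_zero, smul_eq_mul]
  field_simp

lemma setIntegral_Sset_comp_mul_nuDensity_of_lt_half {β x : ℝ} (hβ0 : 0 < β) (hβ : β < 1 / 2)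
    (hx : 0 < x) (f : ℝ → ℝ) :
    ∫ s in Sset β, f (x * s) * nuDensity β s =
      (x * β) ^ (-(1 / (2 * β - 1))) *
        -(∫ u in Ioi (x * β), f u * u ^ (1 / (2 * β - 1) - 1)) / (2 * β - 1) := by
  have hK : 2 * β - 1 < 0 := by linarith
  rw [Sset, if_neg hβ.not_gt, integral_Ici_eq_integral_Ioi,
    setIntegral_congr_fun measurableSet_Ioi fun s hs => by
      rw [nuDensity_eq_mul_rpow hβ0 hx (hβ0.trans hs), abs_of_neg hK, mul_left_comm],
    integral_const_mul,
    integral_comp_mul_left_Ioi (fun u => f u * u ^ (1 / (2 * β - 1) - 1)) β hx, smul_eq_mul]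
  field_simp

lemma hasDerivAt_integral_Ioi {f : ℝ → ℝ} {a y : ℝ} (hay : a < y) (hf : IntegrableOn f (Ioi a))
    (hmeas : StronglyMeasurableAtFilter f (𝓝 y)) (hcont : ContinuousAt f y) :
    HasDerivAt (fun b => ∫ x in Ioi b, f x) (-f y) y := by
  have hint : IntervalIntegrable f volume a y :=
    (intervalIntegrable_iff_integrableOn_Ioc_of_le hay.le).2 (hf.mono_set Ioc_subset_Ioi_self)
  have hsub : HasDerivAt (fun b => (∫ x in Ioi a, f x) - ∫ x in a..b, f x) (-f y) y := by
    simpa using (intervalIntegral.integral_hasDerivAt_right hint hmeas hcont).const_sub _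
  refine hsub.congr_of_eventuallyEq ?_
  filter_upwards [Ioi_mem_nhds hay] with b hb
  rw [← intervalIntegral.integral_Ioi_sub_Ioi hf hb.le, sub_sub_cancel]

lemma hasDerivAt_neg_integral_Ioi_mul_rpow {f : ℝ → ℝ} {C p y : ℝ} (hf : Continuous f)
    (hC : ∀ u, |f u| ≤ C) (hp : p < -1) (hy : 0 < y) :
    HasDerivAt (fun b => -∫ u in Ioi b, f u * u ^ p) (f y * y ^ p) y := by
  have hint : IntegrableOn (fun u => f u * u ^ p) (Ioi (y / 2)) :=
    (integrableOn_Ioi_rpow_of_lt hp (half_pos hy)).bdd_mul hf.aestronglyMeasurable.restrict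
      (ae_of_all _ hC)
  have hcont : ContinuousAt (fun u => f u * u ^ p) y :=
    hf.continuousAt.mul (continuousAt_rpow_const _ _ (Or.inl hy.ne'))
  simpa only [neg_neg] using (hasDerivAt_integral_Ioi (half_lt_self hy) hint
    (hf.measurable.mul (measurable_id.pow_const _)).stronglyMeasurable.stronglyMeasurableAtFilter
    hcont).fun_neg

lemma deriv_eq_of_forall_eq_rpow_neg_mul {φ F : ℝ → ℝ} {α β K r : ℝ} (hr : 0 < r) (hβ : 0 < β)
    (hαK : α * K = 1) (hF : HasDerivAt F (φ (r * β) ^ 2 * (r * β) ^ (α - 1)) (r * β))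
    (hφ : ∀ x, 0 < x → φ x = (x * β) ^ (-α) * F (x * β) / K) :
    deriv φ r = 1 / (r * K) * φ (β * r) ^ 2 - 1 / (r * K) * φ r := by
  have hrβ : 0 < r * β := mul_pos hr hβ
  have hK : K ≠ 0 := right_ne_zero_of_mul_eq_one hαK
  have hrep := (((hasDerivAt_mul_const β).rpow_const (p := -α) (Or.inl hrβ.ne')).mul
    (hF.comp r (hasDerivAt_mul_const β))).div_const K
  rw [(hrep.congr_of_eventuallyEq (eventually_of_mem (Ioi_mem_nhds hr) hφ)).deriv,
    hφ r hr, mul_comm β r]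
  have hneg : (r * β) ^ (-α - 1) = (r * β) ^ (-α) / (r * β) := rpow_sub_one hrβ.ne' _
  have hcancel : (r * β) ^ (-α) * (r * β) ^ (α - 1) * (r * β) = 1 := by
    rw [← rpow_add hrβ, ← rpow_add_one hrβ.ne', show -α + (α - 1) + 1 = 0 by ring, rpow_zero]
  rw [Function.comp_apply, hneg]
  generalize (r * β) ^ (-α) = A at hcancel ⊢
  generalize (r * β) ^ (α - 1) = B at hcancel ⊢
  generalize F (r * β) = G
  generalize φ (r * β) = c
  field_simp
  linear_combination (-A * G) * hαK + c ^ 2 * K * hcancel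

/-- If `φ_β` is differentiable, bounded, and satisfies the fixed point equation
`φ_β(r) = ∫_{S_β} φ_β²(rs) ν_β(ds)` for all `r ≥ 0` (`β ∈ (0,1]`, `β ≠ 1/2`),
then it satisfies the delayed differential equation
`φ_β'(r) = (1/(r(2β−1))) φ_β²(βr) − (1/(r(2β−1))) φ_β(r)` for `r > 0`. -/
theorem fixed_point_implies_delayed_ode (β : ℝ) (hβ : β ∈ Set.Ioc (0 : ℝ) 1)
    (hne : β ≠ 1 / 2) (φ : ℝ → ℝ) (hdiff : Differentiable ℝ φ)
    (hbdd : ∃ C, ∀ r, |φ r| ≤ C)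
    (hfix : ∀ r : ℝ, 0 ≤ r →
      φ r = ∫ s in Sset β, (φ (r * s)) ^ 2 * nuDensity β s) :
    ∀ r : ℝ, 0 < r →
      deriv φ r = (1 / (r * (2 * β - 1))) * (φ (β * r)) ^ 2 -
        (1 / (r * (2 * β - 1))) * φ r := by
  intro r hr
  obtain ⟨hβ0, hβ1⟩ := hβ
  have hαK : 1 / (2 * β - 1) * (2 * β - 1) = 1 :=
    one_div_mul_cancel (sub_ne_zero.2 fun h => hne (by linarith))
  have hφ2 : Continuous fun u => φ u ^ 2 := hdiff.continuous.pow 2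
  set ψ : ℝ → ℝ := fun u => φ u ^ 2 * u ^ (1 / (2 * β - 1) - 1)
  rcases hne.lt_or_gt with hlt | hgt
  · obtain ⟨C, hC⟩ := hbdd
    have hexp : 1 / (2 * β - 1) - 1 < -1 := by
      linarith [one_div_neg.2 (by linarith : 2 * β - 1 < 0)]
    refine deriv_eq_of_forall_eq_rpow_neg_mul (F := fun y => -∫ u in Ioi y, ψ u) hr hβ0 hαK
      ?_ fun x hx => (hfix x hx.le).trans
        (setIntegral_Sset_comp_mul_nuDensity_of_lt_half hβ0 hlt hx fun u => φ u ^ 2)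
    exact hasDerivAt_neg_integral_Ioi_mul_rpow hφ2
      (fun u => by rw [abs_pow]; exact pow_le_pow_left₀ (abs_nonneg _) (hC u) 2) hexp
      (mul_pos hr hβ0)
  · have hexp : 0 ≤ 1 / (2 * β - 1) - 1 :=
      sub_nonneg.2 (one_le_one_div (by linarith) (by linarith))
    refine deriv_eq_of_forall_eq_rpow_neg_mul (F := fun y => ∫ u in 0..y, ψ u) hr hβ0 hαK
      ?_ fun x hx => (hfix x hx.le).trans
        (setIntegral_Sset_comp_mul_nuDensity_of_half_lt hgt hx fun u => φ u ^ 2)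
    exact ((hφ2.mul (continuous_rpow_const hexp)).integral_hasStrictDerivAt 0 _).hasDerivAt
end
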